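/- arXiv:1506.05155 — 9 statements merged into one kernel-verified Lean document; each statement's English description precedes it below -/
import Mathlib

section
/- Let H be a Hilbert space, D a dense subspace of H, and N a finite-dimensional subspace of H. Then D ∩ N^⊥ is dense in N^⊥ (where N^⊥ denotes the orthogonal complement of N). -/
open scoped InnerProductSpace

section

variable {𝕜 E F : Type*} [NontriviallyNormedField 𝕜] [CompleteSpace 𝕜]
  [AddCommGroup E] [TopologicalSpace E] [Module 𝕜 E]
  [AddCommGroup F] [TopologicalSpace F] [IsTopologicalAddGroup F] [Module 𝕜 F]
  [ContinuousSMul 𝕜 F] [T2Space F] [FiniteDimensional 𝕜 F]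

theorem Submodule.map_eq_top_of_dense_of_denseRange {D : Submodule 𝕜 E}
    (hD : Dense (D : Set E)) {f : E →L[𝕜] F} (hf : DenseRange f) :
    D.map (f : E →ₗ[𝕜] F) = ⊤ := by
  have hdense : Dense (D.map (f : E →ₗ[𝕜] F) : Set F) := by
    simpa only [Submodule.map_coe, ContinuousLinearMap.coe_coe] using
      hf.dense_image f.continuous hD
  refine SetLike.coe_injective ?_
  rw [← (Submodule.closed_of_finiteDimensional _).closure_eq, hdense.closure_eq,
    Submodule.top_coe]

variable [IsTopologicalAddGroup E] [ContinuousSMul 𝕜 E]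

theorem ContinuousLinearMap.exists_rightInverse_mem_of_dense {D : Submodule 𝕜 E}
    (hD : Dense (D : Set E)) {f : E →L[𝕜] F} (hf : DenseRange f) :
    ∃ g : F →L[𝕜] E, f.comp g = ContinuousLinearMap.id 𝕜 F ∧ ∀ y, g y ∈ D := by
  have hrange : (f.comp D.subtypeL).range = ⊤ := by
    change LinearMap.range ((f : E →ₗ[𝕜] F) ∘ₗ D.subtype) = ⊤
    rw [LinearMap.range_comp, Submodule.range_subtype]
    exact Submodule.map_eq_top_of_dense_of_denseRange hD hf
  obtain ⟨g, hg⟩ := (f.comp D.subtypeL).exists_rightInverse_of_surjective hrange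
  exact ⟨D.subtypeL.comp g, hg, fun y => (g y).2⟩

theorem ContinuousLinearMap.ker_subset_closure_inter_ker {D : Submodule 𝕜 E}
    (hD : Dense (D : Set E)) {f : E →L[𝕜] F} (hf : DenseRange f) :
    (f.ker : Set E) ⊆ closure ((D : Set E) ∩ f.ker) := by
  obtain ⟨g, hfg, hgD⟩ := f.exists_rightInverse_mem_of_dense hD hf
  have hfg_apply (y : F) : f (g y) = y := congr($hfg y)
  -- `r` is a continuous retraction onto `ker f` that maps `D` into `D ∩ ker f`.
  set r : E →L[𝕜] E := ContinuousLinearMap.id 𝕜 E - g.comp f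
  have hr_ker (x : E) : r x ∈ f.ker := by simp [r, hfg_apply]
  have hr_D : r '' D ⊆ (D : Set E) ∩ f.ker := by
    rintro _ ⟨y, hy, rfl⟩
    exact ⟨D.sub_mem hy (hgD _), hr_ker y⟩
  intro x hx
  have hrx : r x = x := by simp [r, show f x = 0 from hx]
  rw [← hrx]
  exact closure_mono hr_D (map_mem_closure r.continuous (hD.closure_eq ▸ Set.mem_univ x)
    fun y hy => Set.mem_image_of_mem r hy)

end

theorem dense_inter_orthogonal_of_finiteDimensional_general
    {H : Type*} [NormedAddCommGroup H] [InnerProductSpace ℂ H]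
    (D N : Submodule ℂ H) (hD : Dense (D : Set H)) [FiniteDimensional ℂ N] :
    ∀ x ∈ Nᗮ, x ∈ closure ((D : Set H) ∩ (Nᗮ : Set H)) := by
  have hsurj : Function.Surjective N.orthogonalProjectionOnto := fun y =>
    ⟨y, N.orthogonalProjectionOnto_mem_subspace_eq_self y⟩
  have := N.orthogonalProjectionOnto.ker_subset_closure_inter_ker hD hsurj.denseRange
  rwa [Submodule.ker_orthogonalProjectionOnto] at this

/-- If `D` is a dense subspace of a Hilbert space `H` and `N` a
finite-dimensional subspace, then `D ∩ Nᗮ` is dense in `Nᗮ`. -/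
theorem dense_inter_orthogonal_of_finiteDimensional
    {H : Type*} [NormedAddCommGroup H] [InnerProductSpace ℂ H] [CompleteSpace H]
    (D N : Submodule ℂ H) (hD : Dense (D : Set H)) [FiniteDimensional ℂ N] :
    ∀ x ∈ Nᗮ, x ∈ closure ((D : Set H) ∩ (Nᗮ : Set H)) :=
  dense_inter_orthogonal_of_finiteDimensional_general D N hD
end

section
/- Under the assumptions of Section 2 (A symmetric with finite equal deficiency indices, B bounded selfadjoint with 0 ∈ σ_c(B), Π(L) ∩ ℝ ≠ ∅), the operator S defined by D(S) = {x ∈ D(A) : Ax ∈ R(|B|^{1/2})}, Sx = T⁻¹ J |B|^{-1/2} A x, is closed as an operator in the Krein space completion K of (H, ‖|B|^{1/2}·‖). -/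
open scoped InnerProductSpace NNReal
open Filter Topology

/-! The lower bound `C₀ ‖x‖ ≤ ‖(A - λ₀ B) x‖` makes `A - λ₀ B` antilipschitz on `D(A)`. If
`Bh xₙ → x̃` and `J uₙ → ỹ`, then both `A xₙ = Bh uₙ → Bh J ỹ` and `B xₙ = J Bh (Bh xₙ)` converge,
so `(xₙ)` is Cauchy in `H`; its limit `x₀` lies in `D(A)` with `A x₀ = Bh (J ỹ)` because `A` is
closed, and `Bh x₀ = x̃` by continuity of `Bh`. Then `u₀ = J ỹ` does the job. -/

lemma AntilipschitzWith.cauchySeq_of_comp {α β : Type*} [PseudoMetricSpace α]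
    [PseudoMetricSpace β] {K : ℝ≥0} {f : α → β} (hf : AntilipschitzWith K f) {u : ℕ → α}
    (hu : CauchySeq (f ∘ u)) : CauchySeq u := by
  obtain ⟨b, b_nonneg, hb, blim⟩ := cauchySeq_iff_le_tendsto_0.1 hu
  refine cauchySeq_iff_le_tendsto_0.2 ⟨fun n ↦ K * b n, fun n ↦ mul_nonneg K.2 (b_nonneg n), ?_, ?_⟩
  · exact fun n m N hn hm ↦
      (hf.le_mul_dist _ _).trans (mul_le_mul_of_nonneg_left (hb n m N hn hm) K.2)
  · simpa using blim.const_mul (K : ℝ)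

namespace LinearPMap

variable {𝕜 E F : Type*} [RCLike 𝕜] [NormedAddCommGroup E] [NormedSpace 𝕜 E]
  [NormedAddCommGroup F] [NormedSpace 𝕜 F]

lemma antilipschitz_sub_of_bound (A : E →ₗ.[𝕜] F) (B : E →L[𝕜] F) {C : ℝ} (hC : 0 < C)
    (hlb : ∀ x : A.domain, C * ‖(x : E)‖ ≤ ‖A x - B x‖) :
    AntilipschitzWith (Real.toNNReal C⁻¹) fun x : A.domain ↦ A x - B x := by
  refine AddMonoidHomClass.antilipschitz_of_bound
    (A.toFun - (B : E →ₗ[𝕜] F).comp A.domain.subtype) fun x ↦ ?_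
  rw [Real.coe_toNNReal _ (inv_nonneg.2 hC.le), inv_mul_eq_div, le_div_iff₀' hC]
  exact hlb x

lemma IsClosed.exists_tendsto_of_bound [CompleteSpace E] {A : E →ₗ.[𝕜] F} (hA : A.IsClosed)
    (B : E →L[𝕜] F) {C : ℝ} (hC : 0 < C)
    (hlb : ∀ x : A.domain, C * ‖(x : E)‖ ≤ ‖A x - B x‖) {x : ℕ → A.domain} {b c : F}
    (hAx : Tendsto (fun n ↦ A (x n)) atTop (𝓝 b)) (hBx : Tendsto (fun n ↦ B (x n)) atTop (𝓝 c)) :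
    ∃ y : A.domain, Tendsto (fun n ↦ (x n : E)) atTop (𝓝 y) ∧ A y = b := by
  have hx : CauchySeq x :=
    (antilipschitz_sub_of_bound A B hC hlb).cauchySeq_of_comp (hAx.sub hBx).cauchySeq
  obtain ⟨a, ha⟩ := cauchySeq_tendsto_of_complete
    (LipschitzWith.subtype_val (A.domain : Set E) |>.cauchySeq_comp hx)
  have hgraph : (a, b) ∈ A.graph :=
    _root_.IsClosed.mem_of_tendsto hA (ha.prodMk_nhds hAx) (.of_forall fun n ↦ A.mem_graph (x n))
  obtain ⟨y, rfl, hy⟩ := A.mem_graph_iff.1 hgraph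
  exact ⟨y, ha, hy⟩

end LinearPMap

theorem reduction_operator_closed_general
    {H : Type*} [NormedAddCommGroup H] [InnerProductSpace ℂ H] [CompleteSpace H]
    (A : H →ₗ.[ℂ] H) (hAclosed : A.IsClosed)
    (Bh J : H →L[ℂ] H)
    (hJ2 : J.comp J = ContinuousLinearMap.id ℂ H)
    (lam₀ C₀ : ℝ) (hC₀ : 0 < C₀)
    (hlb : ∀ x : A.domain,
      C₀ * ‖(x : H)‖ ≤ ‖A x - (lam₀ : ℂ) • (J.comp (Bh.comp Bh)) (x : H)‖) :
    ∀ (x : ℕ → A.domain) (u : ℕ → H), (∀ n, Bh (u n) = A (x n)) →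
    ∀ xt yt : H,
      Tendsto (fun n => Bh ((x n : H))) atTop (nhds xt) →
      Tendsto (fun n => J (u n)) atTop (nhds yt) →
      ∃ (x₀ : A.domain) (u₀ : H), Bh u₀ = A x₀ ∧ Bh (x₀ : H) = xt ∧ J u₀ = yt := by
  intro x u hu xt yt hx hy
  have hJJ (z : H) : J (J z) = z := congr($hJ2 z)
  have hu_lim : Tendsto u atTop (𝓝 (J yt)) := by
    simpa only [Function.comp_def, hJJ] using (J.continuous.tendsto yt).comp hy
  have hAx : Tendsto (fun n ↦ A (x n)) atTop (𝓝 (Bh (J yt))) := by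
    simpa only [Function.comp_def, hu] using (Bh.continuous.tendsto _).comp hu_lim
  have hBx : Tendsto (fun n ↦ ((lam₀ : ℂ) • J.comp (Bh.comp Bh)) (x n)) atTop
      (𝓝 ((lam₀ : ℂ) • J (Bh xt))) :=
    (((J.comp Bh).continuous.tendsto xt).comp hx).const_smul _
  obtain ⟨x₀, hx₀, hAx₀⟩ := hAclosed.exists_tendsto_of_bound _ hC₀ hlb hAx hBx
  exact ⟨x₀, J yt, hAx₀.symm,
    tendsto_nhds_unique ((Bh.continuous.tendsto _).comp hx₀) hx, hJJ yt⟩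

/-- Setting of Section 2: `A` symmetric densely defined (with finite equal
deficiency indices), `B = J∘Bh∘Bh` bounded selfadjoint with `0 ∈ σ_c(B)` (so
`Bh = |B|^{1/2}` is injective with dense, proper range), `J` the fundamental symmetry,
and `Π(L) ∩ ℝ ≠ ∅` (lower bound at a real `λ₀`).  The operator `S` with
`D(S) = {x ∈ D(A) : Ax ∈ R(Bh)}`, `T(Sx) = J Bh⁻¹ A x`, is closed in the Krein-space
completion `K` of `(H, ‖Bh·‖)`: identifying `K ≅ H` via the isometry `T`, whenever
`xₙ ∈ D(S)` (with `Bh uₙ = A xₙ`, so `T(S xₙ) = J uₙ`), `Bh xₙ → x̃` and `J uₙ → ỹ`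
in `H`, there exists `x₀ ∈ D(S)` with `Bh x₀ = x̃` and `T(S x₀) = ỹ`. -/
theorem reduction_operator_closed
    {H : Type*} [NormedAddCommGroup H] [InnerProductSpace ℂ H] [CompleteSpace H]
    (A : H →ₗ.[ℂ] H) (hAdense : Dense (A.domain : Set H)) (hAclosed : A.IsClosed)
    (hAsymm : ∀ x y : A.domain, ⟪A x, (y : H)⟫_ℂ = ⟪(x : H), A y⟫_ℂ)
    (Bh J : H →L[ℂ] H)
    (hBh : IsSelfAdjoint Bh) (hBhpos : ∀ x : H, 0 ≤ (⟪Bh x, x⟫_ℂ).re)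
    (hBhinj : Function.Injective Bh) (hBhrange : Dense (Set.range Bh))
    (hBhnotsurj : ¬ Function.Surjective Bh)
    (hJ : IsSelfAdjoint J) (hJ2 : J.comp J = ContinuousLinearMap.id ℂ H)
    (hJBh : J.comp Bh = Bh.comp J)
    (hB : IsSelfAdjoint (J.comp (Bh.comp Bh)))
    (lam₀ C₀ : ℝ) (hC₀ : 0 < C₀)
    (hlb : ∀ x : A.domain,
      C₀ * ‖(x : H)‖ ≤ ‖A x - (lam₀ : ℂ) • (J.comp (Bh.comp Bh)) (x : H)‖) :
    ∀ (x : ℕ → A.domain) (u : ℕ → H), (∀ n, Bh (u n) = A (x n)) →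
    ∀ xt yt : H,
      Tendsto (fun n => Bh ((x n : H))) atTop (nhds xt) →
      Tendsto (fun n => J (u n)) atTop (nhds yt) →
      ∃ (x₀ : A.domain) (u₀ : H), Bh u₀ = A x₀ ∧ Bh (x₀ : H) = xt ∧ J u₀ = yt :=
  reduction_operator_closed_general A hAclosed Bh J hJ2 lam₀ C₀ hC₀ hlb
end

section
/- Under the assumptions of Section 2, the operator S (with D(S) = {x ∈ D(A) : Ax ∈ R(|B|^{1/2})}, Sx = T⁻¹J|B|^{-1/2}Ax) is the closure in the Krein space K of the operator B⁻¹A with domain {x ∈ D(A) : Ax ∈ R(B)}. -/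
/-!
Put `B = J Bh²` and `E = A - λ₀ B` on `D(A)`. Since `A` is closed and `E` is bounded below, `E`
has closed range and `E xₙ → E x` forces `xₙ → x`. Hence the graph of `S` is closed: along a
convergent sequence `(Bh xₙ, J uₙ)` in it, `E xₙ` converges. Conversely, for `(Bh x₀, J u₀)` in
the graph of `S`, the vector `q = u₀ - λ₀ J Bh x₀` satisfies `Bh q = E x₀`, so it lies in the
closed finite-codimensional subspace `M = Bh⁻¹(ran E)`. As `ran Bh` is dense, `ran Bh ∩ M` is
dense in `M`, so `q = lim Bh pₙ` with `Bh² pₙ = E zₙ`; then `(Bh zₙ, J Bh pₙ + λ₀ Bh zₙ)` lies in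
the graph of `B⁻¹A` and tends to `(Bh x₀, J u₀)`.
-/

open scoped InnerProductSpace
open Filter Topology

theorem Submodule.finiteDimensional_quotient_comap {K V W : Type*} [DivisionRing K]
    [AddCommGroup V] [Module K V] [AddCommGroup W] [Module K W] (f : V →ₗ[K] W)
    (q : Submodule K W) [FiniteDimensional K (W ⧸ q)] :
    FiniteDimensional K (V ⧸ q.comap f) :=
  .of_injective ((q.comap f).mapQ q f le_rfl) <| by
    rw [← LinearMap.ker_eq_bot, Submodule.ker_mapQ, Submodule.mkQ_map_self]

theorem Submodule.le_topologicalClosure_inf_of_dense {𝕜 E : Type*} [NontriviallyNormedField 𝕜]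
    [CompleteSpace 𝕜] [AddCommGroup E] [TopologicalSpace E] [IsTopologicalAddGroup E]
    [Module 𝕜 E] [ContinuousSMul 𝕜 E] {D M : Submodule 𝕜 E} (hD : Dense (D : Set E))
    (hM : IsClosed (M : Set E)) [FiniteDimensional 𝕜 (E ⧸ M)] :
    M ≤ (D ⊓ M).topologicalClosure := by
  have : IsClosed (M : Set E) := hM
  have hDM : D.map M.mkQ = ⊤ := by
    have hdense : Dense ((D.map M.mkQ : Submodule 𝕜 (E ⧸ M)) : Set (E ⧸ M)) :=
      M.mkQ_surjective.denseRange.dense_image M.continuous_mkQ hD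
    rw [← Submodule.coe_eq_univ, ← hdense.closure_eq,
      (Submodule.closed_of_finiteDimensional (D.map M.mkQ)).closure_eq]
  obtain ⟨g, hg⟩ := (M.mkQ ∘ₗ D.subtype).exists_rightInverse_of_surjective <| by
    rwa [LinearMap.range_comp, Submodule.range_subtype]
  -- a continuous projection onto `M` whose correction term `P x - x` lies in `D`
  set P : E →ₗ[𝕜] E := LinearMap.id - D.subtype ∘ₗ g ∘ₗ M.mkQ
  have hPM : ∀ x, P x ∈ M := fun x ↦ by
    rw [← Submodule.Quotient.mk_eq_zero, ← M.mkQ_apply]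
    simpa [P, sub_eq_zero] using (LinearMap.congr_fun hg (M.mkQ x)).symm
  have hPD : ∀ x ∈ D, P x ∈ D := fun x hx ↦ D.sub_mem hx (g _).2
  have hPc : Continuous P :=
    continuous_id.sub (((D.subtype ∘ₗ g).continuous_of_finiteDimensional).comp M.continuous_mkQ)
  intro m hm
  have hPm : P m = m := by simp [P, (Submodule.Quotient.mk_eq_zero M).2 hm]
  rw [← hPm]
  exact map_mem_closure hPc (hD.closure_eq ▸ Set.mem_univ m) fun x hx ↦ ⟨hPD x hx, hPM x⟩

namespace LinearPMap

variable {𝕜 E F : Type*} [NontriviallyNormedField 𝕜] [NormedAddCommGroup E] [NormedSpace 𝕜 E]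
  [NormedAddCommGroup F] [NormedSpace 𝕜 F]

def subCLM (A : E →ₗ.[𝕜] F) (K : E →L[𝕜] F) : A.domain →ₗ[𝕜] F :=
  A.toFun - K.toLinearMap.comp A.domain.subtype

theorem subCLM_apply (A : E →ₗ.[𝕜] F) (K : E →L[𝕜] F) (x : A.domain) :
    A.subCLM K x = A x - K x :=
  rfl

variable {A : E →ₗ.[𝕜] F} {K : E →L[𝕜] F} {C : ℝ}

theorem tendsto_of_tendsto_subCLM (hC : 0 < C)
    (hlb : ∀ x : A.domain, C * ‖(x : E)‖ ≤ ‖A.subCLM K x‖) {f : ℕ → A.domain} {x : A.domain}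
    (hf : Tendsto (fun n ↦ A.subCLM K (f n)) atTop (𝓝 (A.subCLM K x))) :
    Tendsto (fun n ↦ (f n : E)) atTop (𝓝 x) := by
  rw [tendsto_iff_norm_sub_tendsto_zero] at hf ⊢
  refine squeeze_zero (fun _ ↦ norm_nonneg _) (fun n ↦ ?_) (by simpa using hf.div_const C)
  rw [le_div_iff₀' hC]
  have := hlb (f n - x)
  rwa [LinearMap.map_sub, Submodule.coe_sub] at this

theorem exists_tendsto_of_tendsto_subCLM [CompleteSpace E] (hA : A.IsClosed) (hC : 0 < C)
    (hlb : ∀ x : A.domain, C * ‖(x : E)‖ ≤ ‖A.subCLM K x‖) {f : ℕ → A.domain} {v : F}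
    (hf : Tendsto (fun n ↦ A.subCLM K (f n)) atTop (𝓝 v)) :
    ∃ x : A.domain, A.subCLM K x = v ∧ Tendsto (fun n ↦ (f n : E)) atTop (𝓝 x) := by
  have hcauchy : CauchySeq fun n ↦ (f n : E) := by
    refine Metric.cauchySeq_iff.2 fun ε hε ↦ ?_
    obtain ⟨N, hN⟩ := Metric.cauchySeq_iff.1 hf.cauchySeq (C * ε) (by positivity)
    refine ⟨N, fun m hm n hn ↦ lt_of_mul_lt_mul_left ?_ hC.le⟩
    calc C * dist (f m : E) (f n) ≤ dist (A.subCLM K (f m)) (A.subCLM K (f n)) := by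
          have := hlb (f m - f n)
          rwa [LinearMap.map_sub, Submodule.coe_sub, ← dist_eq_norm, ← dist_eq_norm] at this
      _ < C * ε := hN m hm n hn
  obtain ⟨y, hy⟩ := cauchySeq_tendsto_of_complete hcauchy
  have hAf : Tendsto (fun n ↦ A (f n)) atTop (𝓝 (v + K y)) := by
    simpa [subCLM_apply] using hf.add ((K.continuous.tendsto y).comp hy)
  obtain ⟨x, rfl, hAx⟩ := A.mem_graph_iff.1 <|
    hA.mem_of_tendsto (hy.prodMk_nhds hAf) (Eventually.of_forall fun n ↦ A.mem_graph (f n))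
  exact ⟨x, by simp [subCLM_apply, hAx], hy⟩

theorem isClosed_range_subCLM [CompleteSpace E] (hA : A.IsClosed) (hC : 0 < C)
    (hlb : ∀ x : A.domain, C * ‖(x : E)‖ ≤ ‖A.subCLM K x‖) :
    _root_.IsClosed (LinearMap.range (A.subCLM K) : Set F) := by
  refine isClosed_of_closure_subset fun v hv ↦ ?_
  obtain ⟨w, hw, hwv⟩ := mem_closure_iff_seq_limit.1 hv
  choose f hf using hw
  obtain ⟨x, hx, -⟩ :=
    exists_tendsto_of_tendsto_subCLM hA hC hlb (f := f) (by simpa only [hf] using hwv)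
  exact ⟨x, hx⟩

end LinearPMap

section Reduction

variable {𝕜 H : Type*} [NontriviallyNormedField 𝕜] [NormedAddCommGroup H] [NormedSpace 𝕜 H]

/- The graphs of `S` and of `B⁻¹A` in `K × K`, carried to `H × H` by the isometry `T : K → H`
extending `Bh`. -/
def graphS (A : H →ₗ.[𝕜] H) (Bh J : H →L[𝕜] H) : Set (H × H) :=
  {p | ∃ (x : A.domain) (u : H), Bh u = A x ∧ Bh x = p.1 ∧ J u = p.2}

def graphBInvA (A : H →ₗ.[𝕜] H) (Bh J : H →L[𝕜] H) : Set (H × H) :=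
  {p | ∃ (z : A.domain) (y : H), (J.comp (Bh.comp Bh)) y = A z ∧ Bh z = p.1 ∧ Bh y = p.2}

variable {A : H →ₗ.[𝕜] H} {Bh J : H →L[𝕜] H}

theorem graphBInvA_subset_graphS (hJJ : Function.Involutive J)
    (hJBh : ∀ w, J (Bh w) = Bh (J w)) : graphBInvA A Bh J ⊆ graphS A Bh J := by
  rintro p ⟨z, y, hzy, hz, hy⟩
  exact ⟨z, J (Bh y), by rw [← hzy, ← hJBh]; rfl, hz, (hJJ _).trans hy⟩

theorem mk_mem_graphBInvA (hJJ : Function.Involutive J) (hJBh : ∀ w, J (Bh w) = Bh (J w))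
    {c : 𝕜} {z : A.domain} {p : H} (h : A.subCLM (c • J.comp (Bh.comp Bh)) z = Bh (Bh p)) :
    (Bh z, J (Bh p) + c • Bh z) ∈ graphBInvA A Bh J := by
  refine ⟨z, J p + c • z, ?_, rfl, by rw [map_add, map_smul, hJBh]⟩
  have hJBB : J (Bh (Bh (J p))) = Bh (Bh p) := by rw [← hJBh, ← hJBh, hJJ]
  rw [LinearPMap.subCLM_apply, sub_eq_iff_eq_add] at h
  simp only [ContinuousLinearMap.comp_apply, map_add, map_smul, hJBB, h, smul_apply]

theorem isClosed_graphS [CompleteSpace H] (hJJ : Function.Involutive J)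
    (hJBh : ∀ w, J (Bh w) = Bh (J w)) {c : 𝕜} {C : ℝ} (hA : A.IsClosed) (hC : 0 < C)
    (hlb : ∀ x : A.domain, C * ‖(x : H)‖ ≤ ‖A.subCLM (c • J.comp (Bh.comp Bh)) x‖) :
    IsClosed (graphS A Bh J) := by
  refine isClosed_of_closure_subset fun p hp ↦ ?_
  obtain ⟨s, hs, hsp⟩ := mem_closure_iff_seq_limit.1 hp
  choose x u hxu hx hu using hs
  set L : H × H → H := fun q ↦ J (Bh q.2) - c • J (Bh q.1)
  have hE : ∀ n, A.subCLM (c • J.comp (Bh.comp Bh)) (x n) = L (s n) := fun n ↦ by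
    simp only [L, ← hx, ← hu, LinearPMap.subCLM_apply, ← hxu, smul_apply,
      ContinuousLinearMap.comp_apply]
    rw [hJBh (J (u n)), hJJ]
  have hv : Tendsto (fun n ↦ A.subCLM (c • J.comp (Bh.comp Bh)) (x n)) atTop (𝓝 (L p)) := by
    simp only [hE]
    exact ((by fun_prop : Continuous L).tendsto p).comp hsp
  obtain ⟨x₀, hx₀, hlim⟩ := LinearPMap.exists_tendsto_of_tendsto_subCLM hA hC hlb hv
  have hBx₀ : Bh x₀ = p.1 := by
    refine tendsto_nhds_unique ((Bh.continuous.tendsto _).comp hlim) ?_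
    simpa only [Function.comp_def, hx] using (continuous_fst.tendsto p).comp hsp
  refine ⟨x₀, J p.2, ?_, hBx₀, hJJ p.2⟩
  rw [LinearPMap.subCLM_apply, sub_eq_iff_eq_add] at hx₀
  simp [hx₀, L, hBx₀, hJBh]

theorem graphS_subset_closure_graphBInvA [CompleteSpace 𝕜] [CompleteSpace H]
    (hJJ : Function.Involutive J) (hJBh : ∀ w, J (Bh w) = Bh (J w)) (hBh : DenseRange Bh)
    {c : 𝕜} {C : ℝ} (hA : A.IsClosed) (hC : 0 < C)
    (hlb : ∀ x : A.domain, C * ‖(x : H)‖ ≤ ‖A.subCLM (c • J.comp (Bh.comp Bh)) x‖)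
    [FiniteDimensional 𝕜 (H ⧸ LinearMap.range (A.subCLM (c • J.comp (Bh.comp Bh))))] :
    graphS A Bh J ⊆ closure (graphBInvA A Bh J) := by
  set E := A.subCLM (c • J.comp (Bh.comp Bh))
  rintro ⟨_, _⟩ ⟨x₀, u₀, hxu, rfl, rfl⟩
  set M := (LinearMap.range E).comap (Bh : H →ₗ[𝕜] H)
  have hM : IsClosed (M : Set H) :=
    (LinearPMap.isClosed_range_subCLM hA hC hlb).preimage Bh.continuous
  have := Submodule.finiteDimensional_quotient_comap (Bh : H →ₗ[𝕜] H) (LinearMap.range E)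
  set q := u₀ - c • J (Bh x₀)
  have hq : E x₀ = Bh q := by
    simp [E, q, LinearPMap.subCLM_apply, hxu, hJBh]
  have hD : Dense (LinearMap.range (Bh : H →ₗ[𝕜] H) : Set H) := by
    rwa [LinearMap.coe_range]
  obtain ⟨r, hr, hrq⟩ := mem_closure_iff_seq_limit.1
    (Submodule.le_topologicalClosure_inf_of_dense hD hM ⟨x₀, hq⟩)
  choose p hp using fun n ↦ (hr n).1
  choose z hz using fun n ↦ (hr n).2
  have hr' : ∀ n, r n = Bh (p n) := fun n ↦ (hp n).symm
  have hzx₀ : Tendsto (fun n ↦ (z n : H)) atTop (𝓝 x₀) := by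
    refine LinearPMap.tendsto_of_tendsto_subCLM hC hlb ?_
    show Tendsto (fun n ↦ E (z n)) atTop (𝓝 (E x₀))
    simp only [hz, hq]
    exact (Bh.continuous.tendsto q).comp hrq
  refine mem_closure_of_tendsto (b := atTop) (f := fun n ↦ (Bh (z n), J (r n) + c • Bh (z n))) ?_
    (Eventually.of_forall fun n ↦ ?_)
  · have hBz := (Bh.continuous.tendsto _).comp hzx₀
    have hJq : J q + c • Bh x₀ = J u₀ := by simp [q, hJJ _]
    rw [← hJq]
    exact hBz.prodMk_nhds (((J.continuous.tendsto q).comp hrq).add (hBz.const_smul c))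
  · rw [hr' n]
    exact mk_mem_graphBInvA hJJ hJBh (by rw [hz n, hr' n]; rfl)

theorem closure_graphBInvA_eq_graphS [CompleteSpace 𝕜] [CompleteSpace H]
    (hJJ : Function.Involutive J) (hJBh : ∀ w, J (Bh w) = Bh (J w)) (hBh : DenseRange Bh)
    {c : 𝕜} {C : ℝ} (hA : A.IsClosed) (hC : 0 < C)
    (hlb : ∀ x : A.domain, C * ‖(x : H)‖ ≤ ‖A.subCLM (c • J.comp (Bh.comp Bh)) x‖)
    [FiniteDimensional 𝕜 (H ⧸ LinearMap.range (A.subCLM (c • J.comp (Bh.comp Bh))))] :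
    closure (graphBInvA A Bh J) = graphS A Bh J :=
  (closure_minimal (graphBInvA_subset_graphS hJJ hJBh)
    (isClosed_graphS hJJ hJBh hA hC hlb)).antisymm
      (graphS_subset_closure_graphBInvA hJJ hJBh hBh hA hC hlb)

end Reduction

theorem reduction_operator_is_closure_general
    {H : Type*} [NormedAddCommGroup H] [InnerProductSpace ℂ H] [CompleteSpace H]
    (A : H →ₗ.[ℂ] H) (hAclosed : A.IsClosed)
    (Bh J : H →L[ℂ] H)
    (hBhrange : Dense (Set.range Bh))
    (hJ2 : J.comp J = ContinuousLinearMap.id ℂ H)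
    (hJBh : J.comp Bh = Bh.comp J)
    (lam₀ C₀ : ℝ) (hC₀ : 0 < C₀)
    (hlb : ∀ x : A.domain,
      C₀ * ‖(x : H)‖ ≤ ‖A x - (lam₀ : ℂ) • (J.comp (Bh.comp Bh)) (x : H)‖)
    (hcodim : FiniteDimensional ℂ
      (H ⧸ (LinearMap.range (A.toFun -
        (((lam₀ : ℂ) • (J.comp (Bh.comp Bh))).toLinearMap).comp
          A.domain.subtype)).topologicalClosure)) :
    ∀ xt yt : H,
      (∃ (x₀ : A.domain) (u₀ : H), Bh u₀ = A x₀ ∧ Bh (x₀ : H) = xt ∧ J u₀ = yt) ↔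
      (∀ ε : ℝ, 0 < ε → ∃ (z : A.domain) (y : H),
        (J.comp (Bh.comp Bh)) y = A z ∧ ‖Bh (z : H) - xt‖ < ε ∧ ‖Bh y - yt‖ < ε) := by
  have hJJ : Function.Involutive J := fun w ↦ congr($hJ2 w)
  have hJBh' : ∀ w, J (Bh w) = Bh (J w) := fun w ↦ congr($hJBh w)
  have hlb' : ∀ x : A.domain,
      C₀ * ‖(x : H)‖ ≤ ‖A.subCLM ((lam₀ : ℂ) • J.comp (Bh.comp Bh)) x‖ := hlb
  have : FiniteDimensional ℂ
      (H ⧸ LinearMap.range (A.subCLM ((lam₀ : ℂ) • J.comp (Bh.comp Bh)))) := by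
    rwa [← (LinearPMap.isClosed_range_subCLM hAclosed hC₀ hlb').submodule_topologicalClosure_eq]
  intro xt yt
  change (xt, yt) ∈ graphS A Bh J ↔ _
  rw [← closure_graphBInvA_eq_graphS hJJ hJBh' hBhrange hAclosed hC₀ hlb', Metric.mem_closure_iff]
  simp [graphBInvA, dist_eq_norm, norm_sub_rev xt, norm_sub_rev yt]

/-- In the setting of Section 2 (`A` symmetric densely defined with the
standing assumptions, `B = J∘Bh∘Bh` bounded selfadjoint, `0 ∈ σ_c(B)`, `Π(L)∩ℝ ≠ ∅`),
the operator `S` (`D(S) = {x ∈ D(A) : Ax ∈ R(Bh)}`, `T(Sx) = J Bh⁻¹ A x`) is the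
closure in the Krein space `K` of `B⁻¹A` (domain `{x ∈ D(A) : Ax ∈ R(B)}`):
identifying `K ≅ H` via `T`, a pair `(x̃, ỹ)` lies in the graph of `S` iff it lies
in the `K`-closure of the graph of `B⁻¹A`. -/
theorem reduction_operator_is_closure
    {H : Type*} [NormedAddCommGroup H] [InnerProductSpace ℂ H] [CompleteSpace H]
    (A : H →ₗ.[ℂ] H) (hAdense : Dense (A.domain : Set H)) (hAclosed : A.IsClosed)
    (hAsymm : ∀ x y : A.domain, ⟪A x, (y : H)⟫_ℂ = ⟪(x : H), A y⟫_ℂ)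
    (Bh J : H →L[ℂ] H)
    (hBh : IsSelfAdjoint Bh) (hBhpos : ∀ x : H, 0 ≤ (⟪Bh x, x⟫_ℂ).re)
    (hBhinj : Function.Injective Bh) (hBhrange : Dense (Set.range Bh))
    (hBhnotsurj : ¬ Function.Surjective Bh)
    (hJ : IsSelfAdjoint J) (hJ2 : J.comp J = ContinuousLinearMap.id ℂ H)
    (hJBh : J.comp Bh = Bh.comp J)
    (hB : IsSelfAdjoint (J.comp (Bh.comp Bh)))
    (lam₀ C₀ : ℝ) (hC₀ : 0 < C₀)
    (hlb : ∀ x : A.domain,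
      C₀ * ‖(x : H)‖ ≤ ‖A x - (lam₀ : ℂ) • (J.comp (Bh.comp Bh)) (x : H)‖)
    (hcodim : FiniteDimensional ℂ
      (H ⧸ (LinearMap.range (A.toFun -
        (((lam₀ : ℂ) • (J.comp (Bh.comp Bh))).toLinearMap).comp
          A.domain.subtype)).topologicalClosure)) :
    ∀ xt yt : H,
      (∃ (x₀ : A.domain) (u₀ : H), Bh u₀ = A x₀ ∧ Bh (x₀ : H) = xt ∧ J u₀ = yt) ↔
      (∀ ε : ℝ, 0 < ε → ∃ (z : A.domain) (y : H),
        (J.comp (Bh.comp Bh)) y = A z ∧ ‖Bh (z : H) - xt‖ < ε ∧ ‖Bh y - yt‖ < ε) :=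
  reduction_operator_is_closure_general A hAclosed Bh J hBhrange hJ2 hJBh lam₀ C₀ hC₀ hlb hcodim
end

section
/- Let à be a selfadjoint extension of A and S̃ the corresponding reduction operator in the Krein space K (D(S̃) = {x ∈ D(Ã) : Ãx ∈ R(|B|^{1/2})}). Then S̃ is unbounded; equivalently, if S̃ were bounded then R(|B|^{1/2}) = H, contradicting 0 ∈ σ_c(B). -/
open scoped InnerProductSpace

/-!
Suppose `‖J u‖ ≤ C ‖Bh x‖` whenever `Bh u = Ã x`. With `T = Ã - λ₀ J Bh²`, applying this to
`u = v + λ₀ J Bh x` and using `C₀ ‖x‖ ≤ ‖T x‖` shows `‖v‖ ≤ K ‖Bh v‖` whenever `Bh v = T x`.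
As `T` is closed and bounded below, `M = R(T)` is closed of finite codimension. `Bh` is bounded
below on the closed subspace `Bh⁻¹ M`, so `R(Bh) ∩ M` is closed, hence so is `R(Bh)`, which is
`R(Bh) ∩ M` plus a finite-dimensional space. Being dense, `R(Bh)` would be all of `H`.
-/

section ClosedRange

variable {𝕜 E F : Type*} [NontriviallyNormedField 𝕜]
  [NormedAddCommGroup E] [NormedSpace 𝕜 E] [NormedAddCommGroup F] [NormedSpace 𝕜 F]

theorem LinearPMap.IsClosed.vadd {f : E →ₗ.[𝕜] F} (hf : f.IsClosed) (g : E →L[𝕜] F) :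
    ((g : E →ₗ[𝕜] F) +ᵥ f).IsClosed := by
  have hgraph : (((g : E →ₗ[𝕜] F) +ᵥ f).graph : Set (E × F)) =
      (fun p : E × F => (p.1, p.2 - g p.1)) ⁻¹' f.graph := by
    ext ⟨x, y⟩
    simp only [SetLike.mem_coe, Set.mem_preimage, LinearPMap.mem_graph_iff,
      LinearPMap.vadd_apply]
    constructor
    · rintro ⟨z, rfl, rfl⟩
      exact ⟨z, rfl, by simp⟩
    · rintro ⟨z, rfl, hz⟩
      exact ⟨z, rfl, by simp [hz]⟩
  unfold LinearPMap.IsClosed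
  rw [hgraph]
  exact hf.preimage (by fun_prop)

theorem LinearPMap.IsClosed.isClosed_range_of_bound [CompleteSpace E] [CompleteSpace F]
    {f : E →ₗ.[𝕜] F} (hf : f.IsClosed) {c : ℝ} (hc : 0 < c)
    (hbound : ∀ x : f.domain, c * ‖(x : E)‖ ≤ ‖f x‖) :
    _root_.IsClosed (LinearMap.range f.toFun : Set F) := by
  have : CompleteSpace f.graph := hf.completeSpace_coe
  let p : f.graph →L[𝕜] F := (ContinuousLinearMap.snd 𝕜 E F).comp f.graph.subtypeL
  have hrange : Set.range p = LinearMap.range f.toFun := by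
    rw [← f.graph_map_snd_eq_range]
    ext
    simp [p]
  have hanti : AntilipschitzWith (max c⁻¹ 1).toNNReal p := by
    refine p.antilipschitz_of_bound fun ⟨⟨x, y⟩, hxy⟩ => ?_
    obtain ⟨z, rfl, rfl⟩ : ∃ z : f.domain, (z : E) = x ∧ f z = y := (f.mem_graph_iff).mp hxy
    have hx : ‖(z : E)‖ ≤ c⁻¹ * ‖f z‖ := by
      rw [le_inv_mul_iff₀ hc]
      exact hbound z
    show max ‖(z : E)‖ ‖f z‖ ≤ _ * ‖f z‖
    rw [Real.coe_toNNReal _ (by positivity)]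
    exact max_le (hx.trans (by gcongr; exact le_max_left _ _))
      (le_mul_of_one_le_left (norm_nonneg _) (le_max_right _ _))
  rw [← hrange]
  exact hanti.isClosed_range p.uniformContinuous

theorem ContinuousLinearMap.isClosed_range_inf_of_bound [CompleteSpace E] (f : E →L[𝕜] F)
    {M : Submodule 𝕜 F} (hM : IsClosed (M : Set F)) {K : ℝ}
    (hK : ∀ v, f v ∈ M → ‖v‖ ≤ K * ‖f v‖) :
    IsClosed ((LinearMap.range (f : E →ₗ[𝕜] F) ⊓ M : Submodule 𝕜 F) : Set F) := by
  let V := M.comap (f : E →ₗ[𝕜] F)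
  have : CompleteSpace V := (hM.preimage f.continuous).completeSpace_coe
  let g : V →L[𝕜] F := f.comp V.subtypeL
  have hrange : Set.range g = (LinearMap.range (f : E →ₗ[𝕜] F) ⊓ M : Submodule 𝕜 F) := by
    rw [← Submodule.map_comap_eq]
    ext
    simp [g, V]
  have hanti : AntilipschitzWith K.toNNReal g :=
    g.antilipschitz_of_bound fun v =>
      (hK v v.2).trans (mul_le_mul_of_nonneg_right (Real.le_coe_toNNReal K) (norm_nonneg _))
  rw [← hrange]
  exact hanti.isClosed_range g.uniformContinuous

theorem LinearMap.isClosed_range_of_isClosed_range_inf [CompleteSpace 𝕜]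
    (f : E →ₗ[𝕜] F) {M : Submodule 𝕜 F} [FiniteDimensional 𝕜 (F ⧸ M)]
    (h : IsClosed ((LinearMap.range (f : E →ₗ[𝕜] F) ⊓ M : Submodule 𝕜 F) : Set F)) :
    IsClosed (LinearMap.range f : Set F) := by
  have : (M.comap f).CoFG := by
    rw [← M.ker_mkQ, ← LinearMap.ker_comp]
    exact Submodule.CoFG.ker _
  refine f.isClosed_range_of_isClosed_map_of_finiteDimensional_quotient (s := M.comap f) ?_
  rwa [Submodule.map_comap_eq]

end ClosedRange

theorem norm_le_mul_norm_of_reduction_bound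
    {H : Type*} [NormedAddCommGroup H] [NormedSpace ℂ H]
    {At : H →ₗ.[ℂ] H} {Bh J : H →L[ℂ] H} (hJ : ∀ y, ‖J y‖ = ‖y‖)
    (hJBh : J.comp Bh = Bh.comp J) {lam₀ C₀ C : ℝ} (hC₀ : 0 < C₀)
    (hlb : ∀ x : At.domain,
      C₀ * ‖(x : H)‖ ≤ ‖At x - (lam₀ : ℂ) • (J.comp (Bh.comp Bh)) (x : H)‖)
    (hC : ∀ (x : At.domain) (u : H), Bh u = At x → ‖J u‖ ≤ C * ‖Bh (x : H)‖)
    {v : H} {x : At.domain}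
    (hvx : Bh v = At x - (lam₀ : ℂ) • (J.comp (Bh.comp Bh)) (x : H)) :
    ‖v‖ ≤ (|C| + |lam₀|) * ‖Bh‖ / C₀ * ‖Bh v‖ := by
  set y := Bh (x : H)
  have hu : Bh (v + (lam₀ : ℂ) • J y) = At x := by
    have hBhJ : Bh (J y) = J (Bh y) := (congrArg (· y) hJBh).symm
    rw [map_add, map_smul, hBhJ, hvx]
    simp [y]
  have hx : ‖(x : H)‖ ≤ ‖Bh v‖ / C₀ := by
    rw [le_div_iff₀' hC₀, hvx]
    exact hlb x
  calc ‖v‖ = ‖(v + (lam₀ : ℂ) • J y) - (lam₀ : ℂ) • J y‖ := by rw [add_sub_cancel_right]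
    _ ≤ ‖v + (lam₀ : ℂ) • J y‖ + ‖(lam₀ : ℂ) • J y‖ := norm_sub_le _ _
    _ = ‖J (v + (lam₀ : ℂ) • J y)‖ + |lam₀| * ‖y‖ := by
      rw [norm_smul, hJ, hJ, Complex.norm_real, Real.norm_eq_abs]
    _ ≤ |C| * ‖y‖ + |lam₀| * ‖y‖ := by
      gcongr
      exact (hC x _ hu).trans (by gcongr; exact le_abs_self C)
    _ ≤ (|C| + |lam₀|) * (‖Bh‖ * ‖(x : H)‖) := by
      rw [← add_mul]
      gcongr
      exact Bh.le_opNorm _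
    _ ≤ (|C| + |lam₀|) * (‖Bh‖ * (‖Bh v‖ / C₀)) := by gcongr
    _ = (|C| + |lam₀|) * ‖Bh‖ / C₀ * ‖Bh v‖ := by ring

theorem reduction_operator_unbounded_general
    {H : Type*} [NormedAddCommGroup H] [InnerProductSpace ℂ H] [CompleteSpace H]
    (At : H →ₗ.[ℂ] H) (hAclosed : At.IsClosed)
    (Bh J : H →L[ℂ] H)
    (hBhrange : Dense (Set.range Bh))
    (hBhnotsurj : ¬ Function.Surjective Bh)
    (hJ : IsSelfAdjoint J) (hJ2 : J.comp J = ContinuousLinearMap.id ℂ H)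
    (hJBh : J.comp Bh = Bh.comp J)
    (lam₀ C₀ : ℝ) (hC₀ : 0 < C₀)
    (hlb : ∀ x : At.domain,
      C₀ * ‖(x : H)‖ ≤ ‖At x - (lam₀ : ℂ) • (J.comp (Bh.comp Bh)) (x : H)‖)
    (hcodim : FiniteDimensional ℂ
      (H ⧸ (LinearMap.range (At.toFun -
        (((lam₀ : ℂ) • (J.comp (Bh.comp Bh))).toLinearMap).comp
          At.domain.subtype)).topologicalClosure)) :
    ¬ ∃ C : ℝ, ∀ (x : At.domain) (u : H), Bh u = At x → ‖J u‖ ≤ C * ‖Bh (x : H)‖ := by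
  rintro ⟨C, hC⟩
  set L : H →L[ℂ] H := (lam₀ : ℂ) • J.comp (Bh.comp Bh)
  set M := LinearMap.range (At.toFun - (L : H →ₗ[ℂ] H).comp At.domain.subtype)
  have hM : IsClosed (M : Set H) := by
    have hT : (((-L : H →L[ℂ] H) : H →ₗ[ℂ] H) +ᵥ At).toFun =
        At.toFun - (L : H →ₗ[ℂ] H).comp At.domain.subtype := by
      rw [sub_eq_neg_add]
      rfl
    have := (hAclosed.vadd (-L)).isClosed_range_of_bound hC₀ (fun x => by
      rw [← LinearPMap.toFun_eq_coe, hT]; exact hlb x)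
    rwa [hT] at this
  have : FiniteDimensional ℂ (H ⧸ M) := by
    rwa [hM.submodule_topologicalClosure_eq] at hcodim
  have hJnorm : ∀ y, ‖J y‖ = ‖y‖ :=
    J.norm_map_iff_adjoint_comp_self.mpr (by rw [hJ.adjoint_eq]; exact hJ2)
  have hbound : ∀ v, Bh v ∈ M → ‖v‖ ≤ (|C| + |lam₀|) * ‖Bh‖ / C₀ * ‖Bh v‖ := by
    rintro v ⟨x, hx⟩
    exact norm_le_mul_norm_of_reduction_bound hJnorm hJBh hC₀ hlb hC hx.symm
  have hclosed : IsClosed (Set.range Bh) := by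
    have := (Bh : H →ₗ[ℂ] H).isClosed_range_of_isClosed_range_inf
      (Bh.isClosed_range_inf_of_bound hM hbound)
    rwa [LinearMap.coe_range, ContinuousLinearMap.coe_coe] at this
  exact hBhnotsurj (Set.range_eq_univ.mp (by rw [← hclosed.closure_eq, hBhrange.closure_eq]))

/-- Let `Ã` be a selfadjoint extension of `A` (here: a densely defined
closed symmetric operator in the standing setting of Sections 2–3) and `S̃` the
corresponding reduction operator in the Krein space `K`
(`D(S̃) = {x ∈ D(Ã) : Ãx ∈ R(Bh)}`, `T(S̃x) = J Bh⁻¹ Ã x`).  Since `0 ∈ σ_c(B)`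
(`Bh` injective with dense but proper range), `S̃` is unbounded: there is no constant
`C` with `‖S̃ x‖_K ≤ C ‖x‖_K` on `D(S̃)`. -/
theorem reduction_operator_unbounded
    {H : Type*} [NormedAddCommGroup H] [InnerProductSpace ℂ H] [CompleteSpace H]
    (At : H →ₗ.[ℂ] H) (hAdense : Dense (At.domain : Set H)) (hAclosed : At.IsClosed)
    (hAsymm : ∀ x y : At.domain, ⟪At x, (y : H)⟫_ℂ = ⟪(x : H), At y⟫_ℂ)
    (Bh J : H →L[ℂ] H)
    (hBh : IsSelfAdjoint Bh) (hBhpos : ∀ x : H, 0 ≤ (⟪Bh x, x⟫_ℂ).re)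
    (hBhinj : Function.Injective Bh) (hBhrange : Dense (Set.range Bh))
    (hBhnotsurj : ¬ Function.Surjective Bh)
    (hJ : IsSelfAdjoint J) (hJ2 : J.comp J = ContinuousLinearMap.id ℂ H)
    (hJBh : J.comp Bh = Bh.comp J)
    (hB : IsSelfAdjoint (J.comp (Bh.comp Bh)))
    (lam₀ C₀ : ℝ) (hC₀ : 0 < C₀)
    (hlb : ∀ x : At.domain,
      C₀ * ‖(x : H)‖ ≤ ‖At x - (lam₀ : ℂ) • (J.comp (Bh.comp Bh)) (x : H)‖)
    (hcodim : FiniteDimensional ℂ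
      (H ⧸ (LinearMap.range (At.toFun -
        (((lam₀ : ℂ) • (J.comp (Bh.comp Bh))).toLinearMap).comp
          At.domain.subtype)).topologicalClosure)) :
    ¬ ∃ C : ℝ, ∀ (x : At.domain) (u : H), Bh u = At x → ‖J u‖ ≤ C * ‖Bh (x : H)‖ :=
  reduction_operator_unbounded_general At hAclosed Bh J hBhrange hBhnotsurj hJ hJ2 hJBh lam₀ C₀ hC₀
    hlb hcodim
end

section
/- If H is a Hilbert space and B a bounded selfadjoint injective operator such that every Cauchy sequence (xₙ) in the norm ‖|B|^{1/2}·‖ has a limit in H (i.e. there is x with |B|^{1/2}xₙ → |B|^{1/2}x), then R(|B|^{1/2}) = H, and hence B is boundedly invertible. -/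
open scoped InnerProductSpace
open Filter Topology

/-!
Since `Bh⁴ = B²` and `B` is injective, `Bh` is injective; being selfadjoint, its range is then
dense, as `(range Bh)ᗮ = ker Bh = 0`. Any `z` is a limit of values `Bh xₙ`, so `(Bh xₙ)` is Cauchy
and by hypothesis converges to some `Bh y`, whence `z = Bh y`. Surjectivity passes from `Bh` to
`B² = Bh⁴` and hence to `B`, and the open mapping theorem makes the inverse of `B` bounded.
-/

theorem IsSelfAdjoint.denseRange_of_injective {𝕜 H : Type*} [RCLike 𝕜] [NormedAddCommGroup H]
    [InnerProductSpace 𝕜 H] [CompleteSpace H] {T : H →L[𝕜] H} (hT : IsSelfAdjoint T)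
    (hinj : Function.Injective T) : DenseRange T := by
  have hperp : (LinearMap.range (T : H →ₗ[𝕜] H))ᗮ = ⊥ := by
    rw [hT.isSymmetric.orthogonal_range, LinearMap.ker_eq_bot.2 hinj]
  simpa [DenseRange, LinearMap.coe_range] using Submodule.dense_iff_topologicalClosure_eq_top.2
    (Submodule.topologicalClosure_eq_top_iff.2 hperp)

theorem surjective_of_denseRange_of_cauchySeq_tendsto {α β : Type*} [UniformSpace β] [T2Space β]
    [FrechetUrysohnSpace β] {f : α → β} (hf : DenseRange f)
    (hcomplete : ∀ x : ℕ → α, CauchySeq (f ∘ x) → ∃ y, Tendsto (f ∘ x) atTop (𝓝 (f y))) :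
    Function.Surjective f := by
  intro z
  obtain ⟨u, hu_mem, hu_lim⟩ := mem_closure_iff_seq_limit.1 (hf z)
  choose x hx using hu_mem
  have hfx : f ∘ x = u := funext hx
  obtain ⟨y, hy⟩ := hcomplete x (hfx ▸ hu_lim.cauchySeq)
  exact ⟨y, tendsto_nhds_unique hy (hfx ▸ hu_lim)⟩

theorem surjective_of_complete_in_weak_norm_general
    {H : Type*} [NormedAddCommGroup H] [InnerProductSpace ℂ H] [CompleteSpace H]
    (B Bh : H →L[ℂ] H) (hBinj : Function.Injective B)
    (hBh : IsSelfAdjoint Bh)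
    (hBh4 : (Bh * Bh) * (Bh * Bh) = B * B)
    (hcomplete : ∀ x : ℕ → H, CauchySeq (fun n => Bh (x n)) →
      ∃ y : H, Tendsto (fun n => Bh (x n)) atTop (nhds (Bh y))) :
    Function.Surjective Bh ∧
      ∃ Binv : H →L[ℂ] H, Binv.comp B = ContinuousLinearMap.id ℂ H ∧
        B.comp Binv = ContinuousLinearMap.id ℂ H := by
  have hcomp : ⇑Bh ∘ Bh ∘ Bh ∘ Bh = B ∘ B := congrArg DFunLike.coe hBh4
  have hBhinj : Function.Injective Bh :=
    Function.Injective.of_comp (f := ⇑Bh ∘ Bh ∘ Bh) (hcomp ▸ hBinj.comp hBinj)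
  have hBhsurj : Function.Surjective Bh :=
    surjective_of_denseRange_of_cauchySeq_tendsto (hBh.denseRange_of_injective hBhinj) hcomplete
  have hBsurj : Function.Surjective B :=
    Function.Surjective.of_comp (g := B)
      (hcomp ▸ hBhsurj.comp (hBhsurj.comp (hBhsurj.comp hBhsurj)))
  let e := ContinuousLinearEquiv.ofBijective B
    (LinearMap.ker_eq_bot.2 hBinj) (LinearMap.range_eq_top.2 hBsurj)
  have he : (e : H →L[ℂ] H) = B := ContinuousLinearEquiv.coe_ofBijective ..
  refine ⟨hBhsurj, e.symm, ?_, ?_⟩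
  · rw [← e.coe_symm_comp_coe, he]
  · rw [← e.coe_comp_coe_symm, he]

/-- If `B` is a bounded selfadjoint injective operator on a Hilbert
space `H` and `Bh = |B|^{1/2}` (characterized by: selfadjoint, positive, `Bh⁴ = B²`)
is such that every Cauchy sequence for the norm `‖Bh·‖` has a limit in `H`, then
`R(Bh) = H` and `B` is boundedly invertible. -/
theorem surjective_of_complete_in_weak_norm
    {H : Type*} [NormedAddCommGroup H] [InnerProductSpace ℂ H] [CompleteSpace H]
    (B Bh : H →L[ℂ] H) (hB : IsSelfAdjoint B) (hBinj : Function.Injective B)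
    (hBh : IsSelfAdjoint Bh) (hBhpos : ∀ x : H, 0 ≤ (⟪Bh x, x⟫_ℂ).re)
    (hBh4 : (Bh * Bh) * (Bh * Bh) = B * B)
    (hcomplete : ∀ x : ℕ → H, CauchySeq (fun n => Bh (x n)) →
      ∃ y : H, Tendsto (fun n => Bh (x n)) atTop (nhds (Bh y))) :
    Function.Surjective Bh ∧
      ∃ Binv : H →L[ℂ] H, Binv.comp B = ContinuousLinearMap.id ℂ H ∧
        B.comp Binv = ContinuousLinearMap.id ℂ H :=
  surjective_of_complete_in_weak_norm_general B Bh hBinj hBh hBh4 hcomplete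
end

section
/- Let à be a selfadjoint extension of A and S̃ the corresponding reduction operator. Then λ is an eigenvalue of the pencil L̃(λ) = à − λB (i.e. Ãx = λBx for some x ≠ 0) if and only if λ is an eigenvalue of S̃, with the same eigenvectors. -/
open scoped InnerProductSpace

theorem eq_smul_involution_apply_iff_exists {R M F : Type*} [Semiring R] [AddCommMonoid M]
    [Module R M] [FunLike F M M] [LinearMapClass F R M M] {Bh J : F}
    (hJ : Function.Involutive J) (hJBh : ∀ v, J (Bh v) = Bh (J v)) (c : R) (x y : M) :
    y = c • J (Bh (Bh x)) ↔ ∃ u, Bh u = y ∧ J u = c • Bh x := by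
  -- `J` is an involution, so the second condition determines `u`.
  have hsolve : ∀ u, J u = c • Bh x ↔ u = c • J (Bh x) := fun u => by
    rw [hJ.eq_iff, map_smul]
  simp only [hsolve, exists_eq_right, map_smul, hJBh]
  exact eq_comm

theorem pencil_eigenvalue_iff_reduction_eigenvalue_general
    {H : Type*} [NormedAddCommGroup H] [InnerProductSpace ℂ H]
    (At : H →ₗ.[ℂ] H)
    (Bh J : H →L[ℂ] H)
    (hJ2 : J.comp J = ContinuousLinearMap.id ℂ H)
    (hJBh : J.comp Bh = Bh.comp J) :
    ∀ (lam : ℂ) (x : At.domain), (x : H) ≠ 0 →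
      (At x = lam • (J.comp (Bh.comp Bh)) (x : H) ↔
        ∃ u : H, Bh u = At x ∧ J u = lam • Bh (x : H)) := by
  intro lam x _
  have hJinv : Function.Involutive J := fun v => by simpa using DFunLike.congr_fun hJ2 v
  have hJBh' : ∀ v, J (Bh v) = Bh (J v) := fun v => by simpa using DFunLike.congr_fun hJBh v
  exact eq_smul_involution_apply_iff_exists hJinv hJBh' lam (x : H) (At x)

/-- Let `Ã` be a selfadjoint extension of `A` (in the standing setting
of Sections 2–3, with `B = J∘Bh∘Bh`, `Bh = |B|^{1/2}` injective) and `S̃` the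
reduction operator (`T(S̃x) = J Bh⁻¹ Ã x` on `D(S̃) = {x ∈ D(Ã) : Ãx ∈ R(Bh)}`).
Then `λ` is an eigenvalue of the pencil `L̃(λ) = Ã − λB` with eigenvector `x ≠ 0`
iff `λ` is an eigenvalue of `S̃` with the same eigenvector `x`
(`S̃ x = λ x` reads `∃ u, Bh u = Ã x ∧ J u = λ • Bh x`). -/
theorem pencil_eigenvalue_iff_reduction_eigenvalue
    {H : Type*} [NormedAddCommGroup H] [InnerProductSpace ℂ H] [CompleteSpace H]
    (At : H →ₗ.[ℂ] H) (hAdense : Dense (At.domain : Set H)) (hAclosed : At.IsClosed)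
    (hAsymm : ∀ x y : At.domain, ⟪At x, (y : H)⟫_ℂ = ⟪(x : H), At y⟫_ℂ)
    (Bh J : H →L[ℂ] H)
    (hBh : IsSelfAdjoint Bh) (hBhpos : ∀ x : H, 0 ≤ (⟪Bh x, x⟫_ℂ).re)
    (hBhinj : Function.Injective Bh) (hBhrange : Dense (Set.range Bh))
    (hJ : IsSelfAdjoint J) (hJ2 : J.comp J = ContinuousLinearMap.id ℂ H)
    (hJBh : J.comp Bh = Bh.comp J)
    (hB : IsSelfAdjoint (J.comp (Bh.comp Bh))) :
    ∀ (lam : ℂ) (x : At.domain), (x : H) ≠ 0 →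
      (At x = lam • (J.comp (Bh.comp Bh)) (x : H) ↔
        ∃ u : H, Bh u = At x ∧ J u = lam • Bh (x : H)) :=
  pencil_eigenvalue_iff_reduction_eigenvalue_general At Bh J hJ2 hJBh
end

section
/- In the setting of Section 3, the resolvent sets correspond: ρ(S̃) = ρ(L̃), where ρ(L̃) = {λ : (Ã − λB)⁻¹ exists as a bounded everywhere-defined operator}. In particular σ(S̃) = σ(L̃). Key step: if λ ∈ ρ(S̃) then R(Ã − λB) ⊇ R(B), and if μ ∈ ρ(L̃) then R(Ã − λB) ⊇ R(Ã − μB) = H. -/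
/-!
In the coordinates `T : K → H`, a point of the graph of `S̃` is a pair `(x, u)` with
`Bh u = Ã x`, and `S̃ - λ` sends `Bh x` to `J u - λ Bh x`. Applying `J Bh` to this value gives
`(Ã - λB) x`, which turns a bounded inverse of `Ã - λB` into one of `S̃ - λ` directly. Conversely,
a bounded inverse of `S̃ - λ` makes `Ã - λB` injective with `R(B) ⊆ R(Ã - λB)`; writing
`Ã - λB = Ã - μB - (λ - μ)B` for some `μ ∈ ρ(L̃)` then makes it surjective, and
`Ã - λB = (I - (λ - μ) B (Ã - μB)⁻¹)(Ã - μB)` with a bijective bounded first factor, whose inverse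
is bounded by the open mapping theorem.
-/

open Function
open scoped InnerProductSpace

section

variable {𝕜 E F : Type*} [NontriviallyNormedField 𝕜]
  [NormedAddCommGroup E] [NormedSpace 𝕜 E] [NormedAddCommGroup F] [NormedSpace 𝕜 F]

def LinearMap.HasBoundedInverse {D : Submodule 𝕜 E} (L : D →ₗ[𝕜] F) : Prop :=
  ∃ R : F →L[𝕜] E, (∀ x, R (L x) = x) ∧ Surjective L

theorem LinearMap.HasBoundedInverse.of_comp [CompleteSpace F] {D : Submodule 𝕜 E}
    {L₀ L : D →ₗ[𝕜] F} (h₀ : L₀.HasBoundedInverse) (C : F →L[𝕜] F) (hC : ∀ x, C (L₀ x) = L x)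
    (hinj : Injective L) (hsurj : Surjective L) : L.HasBoundedInverse := by
  obtain ⟨R₀, hR₀, hsurj₀⟩ := h₀
  have hCinj : Injective C := by
    refine (injective_iff_map_eq_zero C).mpr fun y hy => ?_
    obtain ⟨x, rfl⟩ := hsurj₀ y
    rw [hC, ← map_zero L] at hy
    rw [hinj hy, map_zero]
  have hCsurj : Surjective C := fun z => by
    obtain ⟨x, rfl⟩ := hsurj z
    exact ⟨L₀ x, hC x⟩
  let e := ContinuousLinearEquiv.ofBijective C (LinearMap.ker_eq_bot.mpr hCinj)
    (LinearMap.range_eq_top.mpr hCsurj)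
  refine ⟨R₀.comp e.symm.toContinuousLinearMap, fun x => ?_, hsurj⟩
  rw [ContinuousLinearMap.comp_apply, ContinuousLinearEquiv.coe_coe, ← hC,
    ContinuousLinearEquiv.ofBijective_symm_apply_apply, hR₀]

theorem LinearMap.HasBoundedInverse.surjective {D : Submodule 𝕜 E} {L : D →ₗ[𝕜] F}
    (h : L.HasBoundedInverse) : Surjective L :=
  h.elim fun _ hR => hR.2

namespace LinearPMap

def pencil (A : E →ₗ.[𝕜] E) (B : E →L[𝕜] E) (c : 𝕜) : A.domain →ₗ[𝕜] E :=
  A.toFun - c • (B : E →ₗ[𝕜] E).domRestrict A.domain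

variable (A : E →ₗ.[𝕜] E) (B : E →L[𝕜] E)

@[simp]
theorem pencil_apply (c : 𝕜) (x : A.domain) : A.pencil B c x = A x - c • B x := rfl

theorem pencil_apply_eq_sub (c d : 𝕜) (x : A.domain) :
    A.pencil B c x = A.pencil B d x - (c - d) • B x := by
  simp only [pencil_apply, sub_smul]
  abel

end LinearPMap

variable {A : E →ₗ.[𝕜] E} {B : E →L[𝕜] E}

theorem surjective_pencil_of_range_subset {c d : 𝕜} (hd : Surjective (A.pencil B d))
    (hB : Set.range B ⊆ Set.range (A.pencil B c)) : Surjective (A.pencil B c) := fun y => by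
  obtain ⟨x₀, rfl⟩ := hd y
  obtain ⟨x₁, hx₁⟩ := hB ⟨(c - d) • (x₀ : E), rfl⟩
  refine ⟨x₀ + x₁, ?_⟩
  rw [map_add, hx₁, map_smul, LinearPMap.pencil_apply_eq_sub A B c d]
  abel

theorem hasBoundedInverse_pencil_of_bijective [CompleteSpace E] {c d : 𝕜}
    (hd : (A.pencil B d).HasBoundedInverse) (hinj : Injective (A.pencil B c))
    (hsurj : Surjective (A.pencil B c)) : (A.pencil B c).HasBoundedInverse := by
  obtain ⟨R, hR, -⟩ := id hd
  refine hd.of_comp (1 - (c - d) • B.comp R) (fun x => ?_) hinj hsurj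
  simp only [sub_apply, one_apply_eq_self, smul_apply, ContinuousLinearMap.comp_apply, hR]
  exact (LinearPMap.pencil_apply_eq_sub A B c d x).symm

variable {Bh J : E →L[𝕜] E}

theorem pencil_apply_eq_J_Bh (hJ : Involutive J) (hJBh : Function.Commute J Bh) {c : 𝕜}
    {x : A.domain} {u : E} (hu : Bh u = A x) :
    A.pencil (J.comp (Bh.comp Bh)) c x = J (Bh (J u - c • Bh x)) := by
  rw [map_sub, map_sub, hJBh.eq, hJ, hu, map_smul, map_smul]
  rfl

theorem injective_pencil_of_reduction (hJ : Involutive J) (hJBh : Function.Commute J Bh)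
    (hBh : Injective Bh) {c : 𝕜} (Q : E →L[𝕜] E)
    (hQ : ∀ (x : A.domain) (u : E), Bh u = A x → Q (J u - c • Bh x) = Bh x) :
    Injective (A.pencil (J.comp (Bh.comp Bh)) c) := by
  refine (injective_iff_map_eq_zero _).mpr fun x hx => ?_
  -- `(x, c • J (Bh x))` lies in the graph of the reduction and is sent to `0` by `S̃ - c`
  have hu : Bh (c • J (Bh x)) = A x := by
    rw [LinearPMap.pencil_apply, sub_eq_zero] at hx
    rw [hx, map_smul, ← hJBh.eq]
    rfl
  have hBhx := hQ x _ hu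
  rw [map_smul, hJ, sub_self, map_zero] at hBhx
  exact Subtype.ext (hBh (hBhx.symm.trans (map_zero Bh).symm))

theorem range_subset_range_pencil_of_reduction (hJ : Involutive J) (hJBh : Function.Commute J Bh)
    {c : 𝕜} (hsurj : ∀ y : E, ∃ (x : A.domain) (u : E), Bh u = A x ∧ J u - c • Bh x = y) :
    Set.range (J.comp (Bh.comp Bh)) ⊆ Set.range (A.pencil (J.comp (Bh.comp Bh)) c) := by
  rintro _ ⟨y, rfl⟩
  obtain ⟨x, u, hu, hxu⟩ := hsurj (Bh y)
  exact ⟨x, by rw [pencil_apply_eq_J_Bh hJ hJBh hu, hxu]; rfl⟩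

theorem reduction_hasBoundedInverse_of_pencil (hJ : Involutive J) (hJBh : Function.Commute J Bh)
    {c : 𝕜} (h : (A.pencil (J.comp (Bh.comp Bh)) c).HasBoundedInverse) :
    ∃ Q : E →L[𝕜] E,
      (∀ (x : A.domain) (u : E), Bh u = A x → Q (J u - c • Bh x) = Bh x) ∧
      (∀ y : E, ∃ (x : A.domain) (u : E), Bh u = A x ∧ J u - c • Bh x = y) := by
  obtain ⟨R, hR, hsurj⟩ := h
  refine ⟨Bh.comp (R.comp (J.comp Bh)), fun x u hu => ?_, fun y => ?_⟩
  · simp only [ContinuousLinearMap.comp_apply]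
    rw [← pencil_apply_eq_J_Bh hJ hJBh hu, hR]
  · obtain ⟨x, hx⟩ := hsurj (Bh (J y))
    refine ⟨x, J y + c • J (Bh x), ?_, by rw [map_add, map_smul, hJ, hJ, add_sub_cancel_right]⟩
    rw [LinearPMap.pencil_apply, sub_eq_iff_eq_add] at hx
    rw [map_add, map_smul, ← hJBh.eq (Bh x), hx]
    rfl

end

theorem resolvent_sets_coincide_general
    {H : Type*} [NormedAddCommGroup H] [InnerProductSpace ℂ H] [CompleteSpace H]
    (At : H →ₗ.[ℂ] H)
    (Bh J : H →L[ℂ] H)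
    (hBhinj : Function.Injective Bh)
    (hJ2 : J.comp J = ContinuousLinearMap.id ℂ H)
    (hJBh : J.comp Bh = Bh.comp J)
    (hres : ∃ mu : ℂ, ∃ R : H →L[ℂ] H,
      (∀ x : At.domain, R (At x - mu • (J.comp (Bh.comp Bh)) (x : H)) = (x : H)) ∧
      (∀ y : H, ∃ x : At.domain, At x - mu • (J.comp (Bh.comp Bh)) (x : H) = y)) :
    ∀ lam : ℂ,
      ((∃ Q : H →L[ℂ] H,
        (∀ (x : At.domain) (u : H), Bh u = At x →
          Q (J u - lam • Bh (x : H)) = Bh (x : H)) ∧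
        (∀ yt : H, ∃ (x : At.domain) (u : H), Bh u = At x ∧
          J u - lam • Bh (x : H) = yt)) ↔
      (∃ R : H →L[ℂ] H,
        (∀ x : At.domain, R (At x - lam • (J.comp (Bh.comp Bh)) (x : H)) = (x : H)) ∧
        (∀ y : H, ∃ x : At.domain, At x - lam • (J.comp (Bh.comp Bh)) (x : H) = y))) := by
  obtain ⟨mu, hmu⟩ := hres
  have hmu : (At.pencil (J.comp (Bh.comp Bh)) mu).HasBoundedInverse := hmu
  have hJ : Involutive J := DFunLike.congr_fun hJ2
  have hJBh' : Function.Commute J Bh := DFunLike.congr_fun hJBh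
  intro lam
  refine ⟨fun ⟨Q, hQ, hQsurj⟩ => ?_, reduction_hasBoundedInverse_of_pencil hJ hJBh'⟩
  exact hasBoundedInverse_pencil_of_bijective hmu
    (injective_pencil_of_reduction hJ hJBh' hBhinj Q hQ)
    (surjective_pencil_of_range_subset hmu.surjective
      (range_subset_range_pencil_of_reduction hJ hJBh' hQsurj))

/-- In the setting of Section 3 (`Ã` a selfadjoint extension with
`ρ(L̃) ≠ ∅`, `B = J∘Bh∘Bh` bounded selfadjoint with `0 ∈ σ_c(B)`, `S̃` the reduction
operator in the Krein completion `K ≅ H` via `T`): `ρ(S̃) = ρ(L̃)`, hence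
`σ(S̃) = σ(L̃)`.  Here `λ ∈ ρ(L̃)` means `(Ã − λB)⁻¹` exists bounded and everywhere
defined, and `λ ∈ ρ(S̃)` means `(S̃ − λ)⁻¹` exists bounded and everywhere defined
on `K` (expressed in the `T`-coordinates). -/
theorem resolvent_sets_coincide
    {H : Type*} [NormedAddCommGroup H] [InnerProductSpace ℂ H] [CompleteSpace H]
    (At : H →ₗ.[ℂ] H) (hAdense : Dense (At.domain : Set H)) (hAclosed : At.IsClosed)
    (hAsa : At.adjoint = At)
    (Bh J : H →L[ℂ] H)
    (hBh : IsSelfAdjoint Bh) (hBhpos : ∀ x : H, 0 ≤ (⟪Bh x, x⟫_ℂ).re)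
    (hBhinj : Function.Injective Bh) (hBhrange : Dense (Set.range Bh))
    (hBhnotsurj : ¬ Function.Surjective Bh)
    (hJ : IsSelfAdjoint J) (hJ2 : J.comp J = ContinuousLinearMap.id ℂ H)
    (hJBh : J.comp Bh = Bh.comp J)
    (hB : IsSelfAdjoint (J.comp (Bh.comp Bh)))
    (hres : ∃ mu : ℂ, ∃ R : H →L[ℂ] H,
      (∀ x : At.domain, R (At x - mu • (J.comp (Bh.comp Bh)) (x : H)) = (x : H)) ∧
      (∀ y : H, ∃ x : At.domain, At x - mu • (J.comp (Bh.comp Bh)) (x : H) = y)) :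
    ∀ lam : ℂ,
      ((∃ Q : H →L[ℂ] H,
        (∀ (x : At.domain) (u : H), Bh u = At x →
          Q (J u - lam • Bh (x : H)) = Bh (x : H)) ∧
        (∀ yt : H, ∃ (x : At.domain) (u : H), Bh u = At x ∧
          J u - lam • Bh (x : H) = yt)) ↔
      (∃ R : H →L[ℂ] H,
        (∀ x : At.domain, R (At x - lam • (J.comp (Bh.comp Bh)) (x : H)) = (x : H)) ∧
        (∀ y : H, ∃ x : At.domain, At x - lam • (J.comp (Bh.comp Bh)) (x : H) = y))) :=
  resolvent_sets_coincide_general At Bh J hBhinj hJ2 hJBh hres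
end

section
/- In the setting of Section 3: the approximate point spectrum of S̃ is contained in the approximate point spectrum of L̃, i.e. if there is a sequence xₙ ∈ D(S̃) with ‖|B|^{1/2}xₙ‖ = 1 and (J|B|^{-1/2}Ã − λ|B|^{1/2})xₙ → 0, then there is a normalized sequence x̂ₙ ∈ D(Ã), ‖x̂ₙ‖ = 1, with (Ã − λB)x̂ₙ → 0. -/
/-!
Since `J` is an involution commuting with `Bh`, the pencil residual factors through the
residual of the reduced problem: if `Bh u = Ã x` then
`(Ã - λ J Bh²) x = Bh J (J u - λ Bh x)`, so it tends to zero with the latter.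
Normalizing `xₙ` in `H` costs at most the factor `‖Bh‖`, because `‖Bh xₙ‖ = 1` forces
`‖xₙ‖ ≥ ‖Bh‖⁻¹`.
-/

open scoped InnerProductSpace
open Filter Topology

theorem ContinuousLinearMap.inv_norm_le_opNorm_of_norm_apply_eq_one
    {𝕜 E F : Type*} [NontriviallyNormedField 𝕜] [NormedAddCommGroup E] [NormedAddCommGroup F]
    [NormedSpace 𝕜 E] [NormedSpace 𝕜 F] (T : E →L[𝕜] F) {x : E} (hx : ‖T x‖ = 1) :
    ‖x‖⁻¹ ≤ ‖T‖ := by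
  have hx₀ : x ≠ 0 := by
    rintro rfl
    simp at hx
  rw [inv_le_iff_one_le_mul₀' (norm_pos_iff.mpr hx₀), mul_comm, ← hx]
  exact T.le_opNorm x

theorem pencil_residual_eq {R M : Type*} [Ring R] [TopologicalSpace M] [AddCommGroup M]
    [Module R M] {Bh J : M →L[R] M} (hJ2 : J.comp J = ContinuousLinearMap.id R M)
    (hJBh : J.comp Bh = Bh.comp J) {a u : M} (hu : Bh u = a) (c : R) (x : M) :
    a - c • (J.comp (Bh.comp Bh)) x = Bh (J (J u - c • Bh x)) := by
  have hJJ : J (J u) = u := DFunLike.congr_fun hJ2 u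
  have hJB : J (Bh (Bh x)) = Bh (J (Bh x)) := DFunLike.congr_fun hJBh (Bh x)
  simp only [ContinuousLinearMap.comp_apply, map_sub, map_smul, hJJ, hu, hJB]

theorem approx_spectrum_reduction_subset_pencil_general
    {H : Type*} [NormedAddCommGroup H] [InnerProductSpace ℂ H]
    (At : H →ₗ.[ℂ] H)
    (Bh J : H →L[ℂ] H)
    (hJ2 : J.comp J = ContinuousLinearMap.id ℂ H)
    (hJBh : J.comp Bh = Bh.comp J) :
    ∀ (lam : ℂ) (x : ℕ → At.domain) (u : ℕ → H),
      (∀ n, Bh (u n) = At (x n)) →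
      (∀ n, ‖Bh ((x n : H))‖ = 1) →
      Tendsto (fun n => J (u n) - lam • Bh ((x n : H))) atTop (nhds 0) →
      ∃ y : ℕ → At.domain, (∀ n, ‖(y n : H)‖ = 1) ∧
        Tendsto (fun n => At (y n) - lam • (J.comp (Bh.comp Bh)) ((y n : H)))
          atTop (nhds 0) := by
  intro lam x u hu hnorm htend
  have hx₀ : ∀ n, (x n : H) ≠ 0 := fun n hn => by simpa [hn] using hnorm n
  have hres : Tendsto (fun n => At (x n) - lam • (J.comp (Bh.comp Bh)) (x n)) atTop (𝓝 0) := by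
    simp_rw [pencil_residual_eq hJ2 hJBh (hu _)]
    simpa only [Function.comp_def, ContinuousLinearMap.comp_apply, map_zero] using
      ((Bh.comp J).continuous.tendsto 0).comp htend
  have hscale : IsBoundedUnder (· ≤ ·) atTop (norm ∘ fun n => (‖(x n : H)‖⁻¹ : ℂ)) :=
    isBoundedUnder_of ⟨‖Bh‖, fun n => by
      simpa using Bh.inv_norm_le_opNorm_of_norm_apply_eq_one (hnorm n)⟩
  refine ⟨fun n => (‖(x n : H)‖⁻¹ : ℂ) • x n, fun n => norm_smul_inv_norm (hx₀ n), ?_⟩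
  simpa [At.map_smul, smul_sub, smul_comm lam] using hscale.smul_tendsto_zero hres

/-- In the setting of Section 3, `σ_ap(S̃) ⊆ σ_ap(L̃)`: if `xₙ ∈ D(S̃)`
(with `Bh uₙ = Ã xₙ`) satisfies `‖Bh xₙ‖ = 1` (unit `K`-norm) and
`(J Bh⁻¹ Ã − λ)xₙ → 0` in `K`, i.e. `J uₙ − λ • Bh xₙ → 0` in `H`, then there is a
normalized sequence `x̂ₙ ∈ D(Ã)`, `‖x̂ₙ‖ = 1`, with `(Ã − λB)x̂ₙ → 0`. -/
theorem approx_spectrum_reduction_subset_pencil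
    {H : Type*} [NormedAddCommGroup H] [InnerProductSpace ℂ H] [CompleteSpace H]
    (At : H →ₗ.[ℂ] H) (hAdense : Dense (At.domain : Set H)) (hAclosed : At.IsClosed)
    (hAsa : At.adjoint = At)
    (Bh J : H →L[ℂ] H)
    (hBh : IsSelfAdjoint Bh) (hBhpos : ∀ x : H, 0 ≤ (⟪Bh x, x⟫_ℂ).re)
    (hBhinj : Function.Injective Bh) (hBhrange : Dense (Set.range Bh))
    (hJ : IsSelfAdjoint J) (hJ2 : J.comp J = ContinuousLinearMap.id ℂ H)
    (hJBh : J.comp Bh = Bh.comp J)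
    (hB : IsSelfAdjoint (J.comp (Bh.comp Bh))) :
    ∀ (lam : ℂ) (x : ℕ → At.domain) (u : ℕ → H),
      (∀ n, Bh (u n) = At (x n)) →
      (∀ n, ‖Bh ((x n : H))‖ = 1) →
      Tendsto (fun n => J (u n) - lam • Bh ((x n : H))) atTop (nhds 0) →
      ∃ y : ℕ → At.domain, (∀ n, ‖(y n : H)‖ = 1) ∧
        Tendsto (fun n => At (y n) - lam • (J.comp (Bh.comp Bh)) ((y n : H)))
          atTop (nhds 0) :=
  approx_spectrum_reduction_subset_pencil_general At Bh J hJ2 hJBh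
end

section
/- In the setting of Section 3: if λ ∈ σ_c(S̃) (the range R(S̃ − λ) is dense in K but λ is not an eigenvalue), then R(Ã − λB) is dense in H and λ is not an eigenvalue of L̃; hence σ_c(S̃) ⊆ σ_c(L̃), and consequently σ_r(L̃) ⊆ σ_r(S̃). -/
/-!
Write `B = J Bh²` with `J` an involution commuting with `Bh`. If `Bh u = Ã x`, then
`Ã x - λ B x = Bh J (J u - λ Bh x)`, so `R(Ã - λB)` contains the image of a dense subset of
`R(S̃ - λ)` under the continuous map `Bh J`, whose range equals the dense range of `Bh`;
hence it is dense. Conversely an eigenvector `x` of the pencil, `Ã x = λ J Bh² x`, is an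
eigenvector of `S̃` with `u = λ J Bh x`.
-/

open scoped InnerProductSpace

theorem denseRange_iff_forall_exists_norm_sub_lt {ι E : Type*} [SeminormedAddCommGroup E]
    {f : ι → E} :
    DenseRange f ↔ ∀ (y : E) (ε : ℝ), 0 < ε → ∃ i, ‖f i - y‖ < ε := by
  simp only [Metric.denseRange_iff, dist_comm _ (f _), dist_eq_norm, gt_iff_lt]

namespace ContinuousLinearMap

variable {R M : Type*} [Ring R] [AddCommGroup M] [Module R M] [TopologicalSpace M]
  {B J : M →L[R] M}

theorem apply_apply_of_comp_eq_id (hJ2 : J.comp J = .id R M) (w : M) : J (J w) = w :=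
  DFunLike.congr_fun hJ2 w

theorem apply_apply_comm_of_comp_eq (hJB : J.comp B = B.comp J) (w : M) : J (B w) = B (J w) :=
  DFunLike.congr_fun hJB w

theorem apply_apply_sub_smul_of_involution (hJ2 : J.comp J = .id R M)
    (hJB : J.comp B = B.comp J) (u x : M) (c : R) :
    B (J (J u - c • B x)) = B u - c • J (B (B x)) := by
  rw [map_sub, map_smul, apply_apply_of_comp_eq_id hJ2, map_sub, map_smul,
    apply_apply_comm_of_comp_eq hJB (B x)]

theorem denseRange_comp_of_involution (hJ2 : J.comp J = .id R M) (hB : DenseRange B) :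
    DenseRange (B.comp J) := by
  have hJsurj : Function.Surjective J := fun w => ⟨J w, apply_apply_of_comp_eq_id hJ2 w⟩
  rw [DenseRange, coe_comp, hJsurj.range_comp]
  exact hB

theorem exists_apply_eq_and_apply_eq_smul_of_eq_smul (hJ2 : J.comp J = .id R M)
    (hJB : J.comp B = B.comp J) {a x : M} {c : R} (h : a = c • J (B (B x))) :
    ∃ u, B u = a ∧ J u = c • B x := by
  refine ⟨c • J (B x), ?_, ?_⟩
  · rw [h, map_smul, apply_apply_comm_of_comp_eq hJB (B x)]
  · rw [map_smul, apply_apply_of_comp_eq_id hJ2]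

end ContinuousLinearMap

theorem continuous_spectrum_reduction_subset_pencil_general
    {H : Type*} [NormedAddCommGroup H] [InnerProductSpace ℂ H]
    (At : H →ₗ.[ℂ] H)
    (Bh J : H →L[ℂ] H)
    (hBhrange : Dense (Set.range Bh))
    (hJ2 : J.comp J = ContinuousLinearMap.id ℂ H)
    (hJBh : J.comp Bh = Bh.comp J) :
    ∀ lam : ℂ,
      -- `R(S̃ − λ)` is dense in `K` (in `T`-coordinates):
      (∀ (yt : H) (ε : ℝ), 0 < ε → ∃ (x : At.domain) (u : H), Bh u = At x ∧
        ‖(J u - lam • Bh (x : H)) - yt‖ < ε) →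
      -- `λ` is not an eigenvalue of `S̃`:
      (¬ ∃ (x : At.domain) (u : H), (x : H) ≠ 0 ∧ Bh u = At x ∧
        J u = lam • Bh (x : H)) →
      -- then `R(Ã − λB)` is dense in `H` and `λ` is not an eigenvalue of `L̃`:
      (∀ (y : H) (ε : ℝ), 0 < ε → ∃ x : At.domain,
        ‖(At x - lam • (J.comp (Bh.comp Bh)) (x : H)) - y‖ < ε) ∧
      (¬ ∃ x : At.domain, (x : H) ≠ 0 ∧
        At x = lam • (J.comp (Bh.comp Bh)) (x : H)) := by
  intro lam hdense heig
  refine ⟨?_, fun ⟨x, hx0, hx⟩ => heig ?_⟩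
  · let g : {p : At.domain × H // Bh p.2 = At p.1} → H := fun p => J p.1.2 - lam • Bh p.1.1
    have hg : DenseRange g := denseRange_iff_forall_exists_norm_sub_lt.2 fun y ε hε => by
      obtain ⟨x, u, hxu, hlt⟩ := hdense y ε hε
      exact ⟨⟨(x, u), hxu⟩, hlt⟩
    have hpencil : (fun x : At.domain => At x - lam • (J.comp (Bh.comp Bh)) x) ∘
        (fun p => p.1.1) = Bh.comp J ∘ g := by
      ext ⟨⟨x, u⟩, hxu⟩
      simp only [Function.comp_apply, ContinuousLinearMap.coe_comp, g, ← hxu,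
        ContinuousLinearMap.apply_apply_sub_smul_of_involution hJ2 hJBh]
    have hrange :=
      (ContinuousLinearMap.denseRange_comp_of_involution hJ2 hBhrange).comp hg (map_continuous _)
    rw [← hpencil] at hrange
    exact denseRange_iff_forall_exists_norm_sub_lt.1 (hrange.mono (Set.range_comp_subset_range _ _))
  · obtain ⟨u, hu, hJu⟩ :=
      ContinuousLinearMap.exists_apply_eq_and_apply_eq_smul_of_eq_smul hJ2 hJBh hx
    exact ⟨x, u, hx0, hu, hJu⟩

/-- In the setting of Section 3, if `λ ∈ σ_c(S̃)` (the range of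
`S̃ − λ` is dense in `K` and `λ` is not an eigenvalue of `S̃`), then `R(Ã − λB)` is
dense in `H` and `λ` is not an eigenvalue of `L̃`; hence `σ_c(S̃) ⊆ σ_c(L̃)` and
consequently `σ_r(L̃) ⊆ σ_r(S̃)`. -/
theorem continuous_spectrum_reduction_subset_pencil
    {H : Type*} [NormedAddCommGroup H] [InnerProductSpace ℂ H] [CompleteSpace H]
    (At : H →ₗ.[ℂ] H) (hAdense : Dense (At.domain : Set H)) (hAclosed : At.IsClosed)
    (hAsa : At.adjoint = At)
    (Bh J : H →L[ℂ] H)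
    (hBh : IsSelfAdjoint Bh) (hBhpos : ∀ x : H, 0 ≤ (⟪Bh x, x⟫_ℂ).re)
    (hBhinj : Function.Injective Bh) (hBhrange : Dense (Set.range Bh))
    (hJ : IsSelfAdjoint J) (hJ2 : J.comp J = ContinuousLinearMap.id ℂ H)
    (hJBh : J.comp Bh = Bh.comp J)
    (hB : IsSelfAdjoint (J.comp (Bh.comp Bh))) :
    ∀ lam : ℂ,
      -- `R(S̃ − λ)` is dense in `K` (in `T`-coordinates):
      (∀ (yt : H) (ε : ℝ), 0 < ε → ∃ (x : At.domain) (u : H), Bh u = At x ∧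
        ‖(J u - lam • Bh (x : H)) - yt‖ < ε) →
      -- `λ` is not an eigenvalue of `S̃`:
      (¬ ∃ (x : At.domain) (u : H), (x : H) ≠ 0 ∧ Bh u = At x ∧
        J u = lam • Bh (x : H)) →
      -- then `R(Ã − λB)` is dense in `H` and `λ` is not an eigenvalue of `L̃`:
      (∀ (y : H) (ε : ℝ), 0 < ε → ∃ x : At.domain,
        ‖(At x - lam • (J.comp (Bh.comp Bh)) (x : H)) - y‖ < ε) ∧
      (¬ ∃ x : At.domain, (x : H) ≠ 0 ∧
        At x = lam • (J.comp (Bh.comp Bh)) (x : H)) :=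
  continuous_spectrum_reduction_subset_pencil_general At Bh J hBhrange hJ2 hJBh
end
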